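/- Let l, L, m, M ∈ ℝ with 0 ≤ l ≤ L, 0 < L < m ≤ M, let β = √(M/L) (so β > 1), and suppose α_* := l + m − 2·√(L·M) > 0. Let λ : ℕ → ℝ → ℝ and μ : ℕ → ℝ → ℝ satisfy l ≤ λ k t ≤ L for all k ∈ ℕ, t ≥ 0, and m ≤ μ k t ≤ M for all k ≥ 1, t ≥ 0. Let u : ℕ → ℝ → ℝ (indexed by k ≥ 1) be continuously differentiable functions satisfying the transformed birth–death system: (u 1)'(t) = −(λ 0 t + μ 1 t)·u 1 t + μ 1 t · u 2 t, and for k ≥ 2, (u k)'(t) = λ (k−1) t · u (k−1) t − (λ (k−1) t + μ k t)·u k t + μ k t · u (k+1) t. Assume that for every T ≥ 0 the family (k ↦ β^{k−1} · sup_{t ∈ [0,T]} |u k t|) is summable. Then, with V(t) := Σ_{k ≥ 1} β^{k−1} · |u k t|, for all t ≥ 0: V(t) ≤ e^{−α_* t} · V(0). -/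

import Mathlib

set_option maxHeartbeats 2000000

open Set

noncomputable def phiBD (e x : ℝ) : ℝ := Real.sqrt (x^2 + e^2)

lemma phiBD_nonneg (e x : ℝ) : 0 ≤ phiBD e x := Real.sqrt_nonneg _
lemma abs_le_phiBD (e x : ℝ) : |x| ≤ phiBD e x := by
  rw [phiBD, ← Real.sqrt_sq_eq_abs]
  exact Real.sqrt_le_sqrt (by nlinarith [sq_nonneg e])
lemma e_le_phiBD (e x : ℝ) (he : 0 ≤ e) : e ≤ phiBD e x := by
  rw [phiBD]
  calc e = Real.sqrt (e^2) := by rw [Real.sqrt_sq he]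
  _ ≤ _ := Real.sqrt_le_sqrt (by nlinarith [sq_nonneg x])
lemma phiBD_le (e x : ℝ) (he : 0 ≤ e) : phiBD e x ≤ |x| + e := by
  rw [phiBD]
  have h : x^2 + e^2 ≤ (|x| + e)^2 := by nlinarith [abs_nonneg x, sq_abs x]
  calc Real.sqrt (x^2+e^2) ≤ Real.sqrt ((|x|+e)^2) := Real.sqrt_le_sqrt h
  _ = |x| + e := Real.sqrt_sq (by positivity)
lemma phiBD_pos (e x : ℝ) (he : 0 < e) : 0 < phiBD e x :=
  lt_of_lt_of_le he (e_le_phiBD e x he.le)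
lemma hasDerivAt_phiBD (e x : ℝ) (he : 0 < e) :
    HasDerivAt (phiBD e) (x / phiBD e x) x := by
  have h1 : HasDerivAt (fun y : ℝ => y^2 + e^2) (2*x) x := by
    simpa using ((hasDerivAt_pow 2 x).add_const (e^2))
  have h2 : (x:ℝ)^2 + e^2 ≠ 0 := by positivity
  have := (Real.hasDerivAt_sqrt h2).comp x h1
  refine this.congr_deriv ?_
  rw [phiBD]
  field_simp
lemma abs_div_phiBD_le_one (e x : ℝ) (he : 0 < e) : |x / phiBD e x| ≤ 1 := by
  rw [abs_div, abs_of_pos (phiBD_pos e x he), div_le_one (phiBD_pos e x he)]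
  exact abs_le_phiBD e x
lemma mul_self_div_phiBD (e x : ℝ) (he : 0 < e) :
    phiBD e x - e ≤ x * (x / phiBD e x) := by
  have hp := phiBD_pos e x he
  rw [mul_div_assoc', le_div_iff₀ hp]
  have hsq : phiBD e x ^ 2 = x^2 + e^2 := Real.sq_sqrt (by positivity)
  have hle := e_le_phiBD e x he.le
  nlinarith

lemma keyIneqBD (l L m M la muv x y z e dx dz : ℝ)
    (h0l : 0 ≤ l) (hl : l ≤ la) (hL : la ≤ L)
    (h0m : 0 ≤ m) (hm : m ≤ muv) (hM : muv ≤ M)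
    (he : 0 < e) (hdx : |x| ≤ dx) (hdz : |z| ≤ dz) :
    (y / phiBD e y) * (la * x - (la + muv) * y + muv * z)
      ≤ L * dx + M * dz - (l + m) * phiBD e y + (L + M) * e := by
  set p := y / phiBD e y with hp
  have hla : 0 ≤ la := le_trans h0l hl
  have hmu : 0 ≤ muv := le_trans h0m hm
  have hp1 : |p| ≤ 1 := abs_div_phiBD_le_one e y he
  have hp2 : phiBD e y - e ≤ y * p := mul_self_div_phiBD e y he
  have hphi : 0 ≤ phiBD e y := phiBD_nonneg e y
  have h1 : p * (la * x) ≤ L * dx := by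
    calc p * (la * x) ≤ |p * (la * x)| := le_abs_self _
    _ = |p| * (la * |x|) := by rw [abs_mul, abs_mul, abs_of_nonneg hla]
    _ ≤ 1 * (L * dx) := by
        apply mul_le_mul hp1 _ (by positivity) zero_le_one
        exact mul_le_mul hL hdx (abs_nonneg x) (le_trans hla hL)
    _ = L * dx := one_mul _
  have h3 : p * (muv * z) ≤ M * dz := by
    calc p * (muv * z) ≤ |p * (muv * z)| := le_abs_self _
    _ = |p| * (muv * |z|) := by rw [abs_mul, abs_mul, abs_of_nonneg hmu]
    _ ≤ 1 * (M * dz) := by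
        apply mul_le_mul hp1 _ (by positivity) zero_le_one
        exact mul_le_mul hM hdz (abs_nonneg z) (le_trans hmu hM)
    _ = M * dz := one_mul _
  have h2 : (l + m) * phiBD e y - (L + M) * e ≤ (la + muv) * (y * p) := by
    have ha : (l+m) * phiBD e y ≤ (la+muv) * phiBD e y :=
      mul_le_mul_of_nonneg_right (by linarith) hphi
    have hb : (la+muv) * e ≤ (L+M) * e :=
      mul_le_mul_of_nonneg_right (by linarith) he.le
    have hc : (la+muv) * (phiBD e y - e) ≤ (la+muv) * (y*p) :=
      mul_le_mul_of_nonneg_left hp2 (by linarith)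
    rw [mul_sub] at hc
    linarith
  have expand : p * (la * x - (la + muv) * y + muv * z)
      = p * (la*x) - (la+muv)*(y*p) + p*(muv*z) := by ring
  rw [expand]
  linarith

lemma gronwall_scalar {f f' : ℝ → ℝ} {δ K ε a b : ℝ}
    (hf : ContinuousOn f (Icc a b))
    (hf' : ∀ x ∈ Ico a b, HasDerivWithinAt f (f' x) (Ici x) x)
    (ha : f a ≤ δ) (bound : ∀ x ∈ Ico a b, f' x ≤ K * f x + ε) :
    ∀ x ∈ Icc a b, f x ≤ gronwallBound δ K ε (x - a) :=
  le_gronwallBound_of_liminf_deriv_right_le hf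
    (fun x hx _r hr => (hf' x hx).liminf_right_slope_le hr) ha bound



/-- The transformed birth–death system satisfied by the tail sums `u k`
(indexed by `k ≥ 1`) of the difference of two solutions of a birth–death
Kolmogorov system: `(u 1)' = -(λ₀ + μ₁) u₁ + μ₁ u₂` and, for `k ≥ 2`,
`(u k)' = λ_{k-1} u_{k-1} - (λ_{k-1} + μ_k) u_k + μ_k u_{k+1}`, for `t ≥ 0`. -/
def TransformedBD (lam mu : ℕ → ℝ → ℝ) (u : ℕ → ℝ → ℝ) : Prop :=
  (∀ t : ℝ, 0 ≤ t →
    HasDerivAt (u 1) (-(lam 0 t + mu 1 t) * u 1 t + mu 1 t * u 2 t) t) ∧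
  (∀ k : ℕ, 2 ≤ k → ∀ t : ℝ, 0 ≤ t →
    HasDerivAt (u k)
      (lam (k - 1) t * u (k - 1) t - (lam (k - 1) t + mu k t) * u k t
        + mu k t * u (k + 1) t) t)

/-- Theorem 2 of the paper: with `0 ≤ l ≤ L`, `0 < L < m ≤ M`,
`β = √(M/L)` and `α_* = l + m - 2√(LM) > 0`, every (continuously
differentiable) solution `u` of the transformed birth–death system with the
stated summability property satisfies
`V(t) = ∑_{k ≥ 1} β^{k-1} |u k t| ≤ e^{-α_* t} V(0)` for all `t ≥ 0`. -/
theorem bd_weak_ergodic_weighted_decay (l L m M : ℝ)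
    (h0l : 0 ≤ l) (hlL : l ≤ L) (h0L : 0 < L) (hLm : L < m) (hmM : m ≤ M)
    (hα : 0 < l + m - 2 * Real.sqrt (L * M))
    (lam mu : ℕ → ℝ → ℝ)
    (hlaml : ∀ (k : ℕ) (t : ℝ), 0 ≤ t → l ≤ lam k t)
    (hlamL : ∀ (k : ℕ) (t : ℝ), 0 ≤ t → lam k t ≤ L)
    (hmum : ∀ k : ℕ, 1 ≤ k → ∀ t : ℝ, 0 ≤ t → m ≤ mu k t)
    (hmuM : ∀ k : ℕ, 1 ≤ k → ∀ t : ℝ, 0 ≤ t → mu k t ≤ M)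
    (u : ℕ → ℝ → ℝ)
    (hC1 : ∀ k : ℕ, 1 ≤ k → ContDiff ℝ 1 (u k))
    (hsys : TransformedBD lam mu u)
    (hsum : ∀ T : ℝ, 0 ≤ T →
      Summable fun k : ℕ =>
        Real.sqrt (M / L) ^ k * ⨆ s : Set.Icc (0:ℝ) T, |u (k + 1) s.1|) :
    ∀ t : ℝ, 0 ≤ t →
      (∑' k : ℕ, Real.sqrt (M / L) ^ k * |u (k + 1) t|)
        ≤ Real.exp (-(l + m - 2 * Real.sqrt (L * M)) * t)
            * ∑' k : ℕ, Real.sqrt (M / L) ^ k * |u (k + 1) 0| := by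
  obtain ⟨hsys1, hsys2⟩ := hsys
  intro t₀ ht₀
  set β := Real.sqrt (M / L) with hβdef
  set sLM := Real.sqrt (L * M) with hsLMdef
  have h0m : (0:ℝ) < m := lt_trans h0L hLm
  have h0M : (0:ℝ) < M := lt_of_lt_of_le h0m hmM
  have hβsq : β^2 = M / L := Real.sq_sqrt (by positivity)
  have hβ0 : 0 ≤ β := Real.sqrt_nonneg _
  have hβ1 : 1 < β := by
    have hML : 1 < M / L := (one_lt_div h0L).2 (lt_of_lt_of_le hLm hmM)
    nlinarith
  have hβpos : 0 < β := lt_trans zero_lt_one hβ1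
  have hβL : β * L = sLM := by
    have h1 : L * M = (M/L) * L^2 := by field_simp
    rw [hsLMdef, h1, Real.sqrt_mul (by positivity), Real.sqrt_sq h0L.le, ← hβdef]
  have hM_eq : M = β * sLM := by
    have h2 : (M/L) * (L*M) = M^2 := by field_simp
    calc M = Real.sqrt (M^2) := (Real.sqrt_sq h0M.le).symm
    _ = Real.sqrt ((M/L)*(L*M)) := by rw [h2]
    _ = β * sLM := by rw [Real.sqrt_mul (by positivity)]
  have hsLM0 : 0 ≤ sLM := Real.sqrt_nonneg _
  set α := l + m - 2 * sLM with hαdef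
  set T := t₀ + 1 with hTdef
  have hT0 : 0 ≤ T := by linarith
  have htT : t₀ < T := by simp [hTdef]
  haveI : CompactSpace (Set.Icc (0:ℝ) T) := isCompact_iff_compactSpace.mp isCompact_Icc
  set σ : ℕ → ℝ := fun j => ⨆ s : Set.Icc (0:ℝ) T, |u (j+1) s.1| with hσdef
  have hubd : ∀ j, ∀ τ ∈ Set.Icc (0:ℝ) T, |u (j+1) τ| ≤ σ j := by
    intro j τ hτ
    have hcont : Continuous fun s : Set.Icc (0:ℝ) T => |u (j+1) s.1| :=
      continuous_abs.comp ((hC1 (j+1) (by omega)).continuous.comp continuous_subtype_val)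
    have hbdd : BddAbove (Set.range fun s : Set.Icc (0:ℝ) T => |u (j+1) s.1|) :=
      (isCompact_range hcont).bddAbove
    simp only [hσdef]
    exact le_ciSup hbdd ⟨τ, hτ⟩
  have hσ0 : ∀ j, 0 ≤ σ j := fun j =>
    le_trans (abs_nonneg _) (hubd j 0 ⟨le_refl 0, hT0⟩)
  have hσsum : Summable (fun k => β^k * σ k) := by
    simp only [hσdef]; exact hsum T hT0
  have hVsum : ∀ s ∈ Set.Icc (0:ℝ) T, Summable (fun k => β^k * |u (k+1) s|) := by
    intro s hs
    exact Summable.of_nonneg_of_le (fun k => by positivity)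
      (fun k => mul_le_mul_of_nonneg_left (hubd k s hs) (by positivity)) hσsum
  set D : ℕ → ℝ → ℝ := fun k t =>
    if k = 0 then -(lam 0 t + mu 1 t) * u 1 t + mu 1 t * u 2 t
    else lam k t * u k t - (lam k t + mu (k+1) t) * u (k+1) t + mu (k+1) t * u (k+2) t
    with hDdef
  have hD : ∀ k t, 0 ≤ t → HasDerivAt (u (k+1)) (D k t) t := by
    intro k t ht
    cases k with
    | zero => simpa [hDdef] using hsys1 t ht
    | succ j => simpa [hDdef] using hsys2 (j+2) (by omega) t ht
  set w : ℕ → ℝ → ℝ := fun k t =>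
    if t ≤ 0 then u (k+1) 0 + t * D k 0 else u (k+1) t with hwdef
  set Dw : ℕ → ℝ → ℝ := fun k t => if t ≤ 0 then D k 0 else D k t with hDwdef
  have hw_eq : ∀ k t, 0 ≤ t → w k t = u (k+1) t := by
    intro k t ht
    by_cases h : t ≤ 0
    · have ht0 : t = 0 := le_antisymm h ht
      simp [hwdef, ht0]
    · simp [hwdef, h]
  have hDw_eq : ∀ k t, 0 ≤ t → Dw k t = D k t := by
    intro k t ht
    by_cases h : t ≤ 0
    · have ht0 : t = 0 := le_antisymm h ht
      simp [hDwdef, ht0]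
    · simp [hDwdef, h]
  have hwD : ∀ k x, HasDerivAt (w k) (Dw k x) x := by
    intro k x
    rcases lt_trichotomy x 0 with hx | hx | hx
    · have hev : w k =ᶠ[nhds x] fun t => u (k+1) 0 + t * D k 0 := by
        filter_upwards [Iio_mem_nhds hx] with t ht
        simp only [hwdef]
        rw [if_pos (le_of_lt (mem_Iio.mp ht))]
      have hlin : HasDerivAt (fun t : ℝ => u (k+1) 0 + t * D k 0) (D k 0) x := by
        simpa using ((hasDerivAt_id x).mul_const (D k 0)).const_add (u (k+1) 0)
      have hres := hlin.congr_of_eventuallyEq hev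
      have hDwx : Dw k x = D k 0 := by simp [hDwdef, le_of_lt hx]
      rw [hDwx]; exact hres
    · subst hx
      have h1 : HasDerivWithinAt (w k) (D k 0) (Set.Ici 0) 0 := by
        refine ((hD k 0 le_rfl).hasDerivWithinAt).congr ?_ ?_
        · intro t ht; exact hw_eq k t ht
        · exact hw_eq k 0 le_rfl
      have h2 : HasDerivWithinAt (w k) (D k 0) (Set.Iic 0) 0 := by
        have hlin : HasDerivAt (fun t : ℝ => u (k+1) 0 + t * D k 0) (D k 0) 0 := by
          simpa using ((hasDerivAt_id (0:ℝ)).mul_const (D k 0)).const_add (u (k+1) 0)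
        refine hlin.hasDerivWithinAt.congr ?_ ?_
        · intro t ht
          simp only [hwdef]
          rw [if_pos (mem_Iic.mp ht)]
        · simp [hwdef]
      have h3 := h2.union h1
      rw [Set.Iic_union_Ici] at h3
      have hDwx : Dw k 0 = D k 0 := by simp [hDwdef]
      rw [hDwx]; exact hasDerivWithinAt_univ.mp h3
    · have hev : w k =ᶠ[nhds x] u (k+1) := by
        filter_upwards [Ioi_mem_nhds hx] with t ht
        simp only [hwdef]
        rw [if_neg (not_le.mpr (mem_Ioi.mp ht))]
      have hres := (hD k x hx.le).congr_of_eventuallyEq hev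
      have hDwx : Dw k x = D k x := by simp [hDwdef, not_le.mpr hx]
      rw [hDwx]; exact hres
  set C₀ := ∑' k : ℕ, (β⁻¹)^(k+2) with hC₀def
  have hgeo : Summable (fun k : ℕ => (β⁻¹)^(k+2)) := by
    apply (summable_nat_add_iff 2).mpr
    exact summable_geometric_of_lt_one (by positivity) (inv_lt_one_of_one_lt₀ hβ1)
  have hC₀0 : 0 ≤ C₀ := tsum_nonneg (fun k => by positivity)
  set CC := C₀ * (1 + (L+M)/α) with hCCdef
  have hCC0 : 0 ≤ CC := by
    have : 0 ≤ (L+M)/α := div_nonneg (by linarith) hα.le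
    rw [hCCdef]; positivity
  have key : ∀ ε : ℝ, 0 < ε →
      (∑' k : ℕ, β^k * |u (k+1) t₀|)
        ≤ Real.exp (-α * t₀) * (∑' k : ℕ, β^k * |u (k+1) 0|) + ε * CC := by
    intro ε hε
    set e : ℕ → ℝ := fun k => ε * (β⁻¹)^(2*k+2) with hedef
    have he : ∀ k, 0 < e k := fun k =>
      mul_pos hε (pow_pos (inv_pos.mpr hβpos) _)
    have heq : ∀ k, β^k * e k = ε * (β⁻¹)^(k+2) := by
      intro k
      have h1 : (β⁻¹)^(2*k+2) = (β⁻¹)^k * (β⁻¹)^(k+2) := by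
        rw [← pow_add]; congr 1; ring
      simp only [hedef]
      calc β^k * (ε * (β⁻¹)^(2*k+2)) = ε * ((β^k * (β⁻¹)^k) * (β⁻¹)^(k+2)) := by
            rw [h1]; ring
      _ = ε * (β⁻¹)^(k+2) := by
            rw [← mul_pow, mul_inv_cancel₀ hβpos.ne', one_pow, one_mul]
    have hefun : (fun k => β^k * e k) = fun k => ε * (β⁻¹)^(k+2) := funext heq
    have hesum : Summable (fun k => β^k * e k) := by
      rw [hefun]; exact hgeo.mul_left ε
    have hC₀sum : ∑' k : ℕ, β^k * e k = ε * C₀ := by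
      rw [hefun, tsum_mul_left, hC₀def]
    set f : ℕ → ℝ → ℝ := fun k s => β^k * phiBD (e k) (w k s) with hfdef
    set f' : ℕ → ℝ → ℝ := fun k s => β^k * (w k s / phiBD (e k) (w k s) * Dw k s)
      with hf'def
    have hfD : ∀ k s, HasDerivAt (f k) (f' k s) s := by
      intro k s
      have hcomp := (hasDerivAt_phiBD (e k) (w k s) (he k)).comp s (hwD k s)
      have h2 := hcomp.const_mul ((β:ℝ)^k)
      simp only [hfdef, hf'def]
      exact h2
    have hf_nonneg : ∀ k s, 0 ≤ f k s := by
      intro k s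
      simp only [hfdef]
      exact mul_nonneg (pow_nonneg hβ0 k) (phiBD_nonneg _ _)
    set b : ℕ → ℝ := fun k => β^k * ((L+M) * σ k + M * σ (k+1)) + L * (β^k * σ (k-1))
      with hbdef
    have hbsum : Summable b := by
      have h1 : Summable (fun k => β^k * ((L+M) * σ k + M * σ (k+1))) := by
        have heq1 : (fun k => β^k * ((L+M) * σ k + M * σ (k+1)))
            = fun k => (L+M) * (β^k * σ k) + (M * β⁻¹) * (β^(k+1) * σ (k+1)) := by
          funext k
          have : β^(k+1) = β * β^k := by rw [pow_succ]; ring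
          field_simp [this]
          ring
        rw [heq1]
        exact (hσsum.mul_left _).add (((summable_nat_add_iff 1).mpr hσsum).mul_left _)
      have h2 : Summable (fun k => L * (β^k * σ (k-1))) := by
        have hs : Summable (fun k => β^(k-1) * σ (k-1)) := by
          apply (summable_nat_add_iff 1).mp
          simpa using hσsum
        apply Summable.mul_left
        apply Summable.of_nonneg_of_le
          (fun k => mul_nonneg (pow_nonneg hβ0 k) (hσ0 _))
          (fun k => ?_) (hs.mul_left β)
        cases k with
        | zero => simpa using le_mul_of_one_le_left (hσ0 0) hβ1.le
        | succ j =>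
          simp only [Nat.add_sub_cancel]
          rw [pow_succ]
          ring_nf
          exact le_refl _
      exact h1.add h2
    have hDb : ∀ k, ∀ τ ∈ Set.Icc (0:ℝ) T,
        |D k τ| ≤ (L+M) * σ k + M * σ (k+1) + L * σ (k-1) := by
      intro k τ hτ
      obtain ⟨hτ0, hτT⟩ := hτ
      cases k with
      | zero =>
        show |D 0 τ| ≤ (L+M) * σ 0 + M * σ 1 + L * σ 0
        have h1 : |u 1 τ| ≤ σ 0 := hubd 0 τ ⟨hτ0, hτT⟩
        have h2 : |u 2 τ| ≤ σ 1 := hubd 1 τ ⟨hτ0, hτT⟩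
        have hl0 := hlaml 0 τ hτ0
        have hL0 := hlamL 0 τ hτ0
        have hm1 := hmum 1 le_rfl τ hτ0
        have hM1 := hmuM 1 le_rfl τ hτ0
        have hd : D 0 τ = -(lam 0 τ + mu 1 τ) * u 1 τ + mu 1 τ * u 2 τ := by
          simp [hDdef]
        rw [hd]
        have habs := abs_add_le (-(lam 0 τ + mu 1 τ) * u 1 τ) (mu 1 τ * u 2 τ)
        have hA : |(-(lam 0 τ + mu 1 τ)) * u 1 τ| ≤ (L+M) * σ 0 := by
          rw [abs_mul, abs_neg, abs_of_nonneg (by linarith)]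
          exact mul_le_mul (by linarith) h1 (abs_nonneg _) (by linarith)
        have hB : |mu 1 τ * u 2 τ| ≤ M * σ 1 := by
          rw [abs_mul, abs_of_nonneg (by linarith)]
          exact mul_le_mul hM1 h2 (abs_nonneg _) (by linarith)
        have hC : 0 ≤ L * σ 0 := mul_nonneg h0L.le (hσ0 _)
        linarith
      | succ j =>
        show |D (j+1) τ| ≤ (L+M) * σ (j+1) + M * σ (j+2) + L * σ j
        have h0 : |u (j+1) τ| ≤ σ j := hubd j τ ⟨hτ0, hτT⟩
        have h1 : |u (j+2) τ| ≤ σ (j+1) := hubd (j+1) τ ⟨hτ0, hτT⟩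
        have h2 : |u (j+3) τ| ≤ σ (j+2) := hubd (j+2) τ ⟨hτ0, hτT⟩
        have hl0 := hlaml (j+1) τ hτ0
        have hL0 := hlamL (j+1) τ hτ0
        have hm1 := hmum (j+2) (by omega) τ hτ0
        have hM1 := hmuM (j+2) (by omega) τ hτ0
        have hd : D (j+1) τ = lam (j+1) τ * u (j+1) τ
            - (lam (j+1) τ + mu (j+2) τ) * u (j+2) τ + mu (j+2) τ * u (j+3) τ := by
          simp [hDdef]
        rw [hd]
        have h3 : lam (j+1) τ * u (j+1) τ - (lam (j+1) τ + mu (j+2) τ) * u (j+2) τ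
            + mu (j+2) τ * u (j+3) τ
            = lam (j+1) τ * u (j+1) τ + (-((lam (j+1) τ + mu (j+2) τ) * u (j+2) τ))
              + mu (j+2) τ * u (j+3) τ := by ring
        rw [h3]
        have habs := abs_add_three (lam (j+1) τ * u (j+1) τ)
          (-((lam (j+1) τ + mu (j+2) τ) * u (j+2) τ)) (mu (j+2) τ * u (j+3) τ)
        rw [abs_neg] at habs
        have hA : |lam (j+1) τ * u (j+1) τ| ≤ L * σ j := by
          rw [abs_mul, abs_of_nonneg (by linarith)]
          exact mul_le_mul hL0 h0 (abs_nonneg _) (by linarith)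
        have hB : |(lam (j+1) τ + mu (j+2) τ) * u (j+2) τ| ≤ (L+M) * σ (j+1) := by
          rw [abs_mul, abs_of_nonneg (by linarith)]
          exact mul_le_mul (by linarith) h1 (abs_nonneg _) (by linarith)
        have hCb : |mu (j+2) τ * u (j+3) τ| ≤ M * σ (j+2) := by
          rw [abs_mul, abs_of_nonneg (by linarith)]
          exact mul_le_mul hM1 h2 (abs_nonneg _) (by linarith)
        linarith
    have hb' : ∀ k, ∀ x ∈ Set.Ioo (-1:ℝ) T, ‖f' k x‖ ≤ b k := by
      intro k x hx
      have hβk : (0:ℝ) ≤ β^k := pow_nonneg hβ0 k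
      have hq : |w k x / phiBD (e k) (w k x)| ≤ 1 := abs_div_phiBD_le_one _ _ (he k)
      have hDwb : |Dw k x| ≤ (L+M) * σ k + M * σ (k+1) + L * σ (k-1) := by
        by_cases h : x ≤ 0
        · have hh : Dw k x = D k 0 := by simp [hDwdef, h]
          rw [hh]; exact hDb k 0 ⟨le_refl 0, hT0⟩
        · have hh : Dw k x = D k x := by simp [hDwdef, h]
          rw [hh]; exact hDb k x ⟨le_of_not_ge h, hx.2.le⟩
      calc ‖f' k x‖ = β^k * (|w k x / phiBD (e k) (w k x)| * |Dw k x|) := by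
            simp only [hf'def, Real.norm_eq_abs, abs_mul, abs_pow, abs_of_nonneg hβ0]
      _ ≤ β^k * (1 * ((L+M) * σ k + M * σ (k+1) + L * σ (k-1))) := by
            apply mul_le_mul_of_nonneg_left _ hβk
            exact mul_le_mul hq hDwb (abs_nonneg _) zero_le_one
      _ = b k := by simp only [hbdef]; ring
    have hmem0 : (0:ℝ) ∈ Set.Ioo (-1:ℝ) T := ⟨by norm_num, by linarith⟩
    have hVsummand : ∀ s ∈ Set.Icc (0:ℝ) T, Summable (fun k => f k s) := by
      intro s hs
      apply Summable.of_nonneg_of_le (fun k => hf_nonneg k s) (fun k => ?_)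
        (hσsum.add hesum)
      have hphile : phiBD (e k) (w k s) ≤ |u (k+1) s| + e k := by
        rw [hw_eq k s hs.1]; exact phiBD_le _ _ (he k).le
      calc f k s = β^k * phiBD (e k) (w k s) := by simp only [hfdef]
      _ ≤ β^k * (|u (k+1) s| + e k) :=
          mul_le_mul_of_nonneg_left hphile (pow_nonneg hβ0 k)
      _ ≤ β^k * (σ k + e k) :=
          mul_le_mul_of_nonneg_left (by linarith [hubd k s hs]) (pow_nonneg hβ0 k)
      _ = β^k * σ k + β^k * e k := by ring
    have hVD : ∀ x ∈ Set.Ioo (-1:ℝ) T,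
        HasDerivAt (fun s => ∑' k, f k s) (∑' k, f' k x) x := by
      intro x hx
      exact hasDerivAt_tsum_of_isPreconnected hbsum isOpen_Ioo isPreconnected_Ioo
        (fun n y _ => hfD n y) (fun n y hy => hb' n y hy) hmem0
        (hVsummand 0 ⟨le_refl 0, hT0⟩) hx
    have hineq : ∀ x ∈ Set.Ico (0:ℝ) t₀,
        (∑' k, f' k x) ≤ (-α) * (∑' k, f k x) + ε * ((L+M) * C₀) := by
      intro x hx
      obtain ⟨hx0, hxt⟩ := hx
      have hxT : x ∈ Set.Icc (0:ℝ) T := ⟨hx0, by linarith⟩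
      have hgsum : Summable (fun k => f k x) := hVsummand x hxT
      have hf'sum : Summable (fun k => f' k x) :=
        Summable.of_norm_bounded hbsum (fun k => hb' k x ⟨by linarith, by linarith⟩)
      have hfx : ∀ k, f k x = β^k * phiBD (e k) (u (k+1) x) := by
        intro k; simp only [hfdef]; rw [hw_eq k x hx0]
      have hf'x : ∀ k, f' k x
          = β^k * (u (k+1) x / phiBD (e k) (u (k+1) x) * D k x) := by
        intro k; simp only [hf'def]; rw [hw_eq k x hx0, hDw_eq k x hx0]
      set Q : ℕ → ℝ := fun k => match k with | 0 => 0 | (j+1) => f j x with hQdef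
      have hQ0 : Q 0 = 0 := by rw [hQdef]
      have hQs : ∀ j, Q (j+1) = f j x := fun j => by rw [hQdef]
      have hterm : ∀ k, f' k x ≤ sLM * Q k
          + (sLM * f (k+1) x + (L+M) * (β^k * e k)) - (l+m) * f k x := by
        intro k
        cases k with
        | zero =>
          show f' 0 x ≤ sLM * Q 0 + (sLM * f 1 x + (L+M) * (β^0 * e 0)) - (l+m) * f 0 x
          have hky := keyIneqBD l L m M (lam 0 x) (mu 1 x) 0 (u 1 x) (u 2 x) (e 0) 0
            (phiBD (e 1) (u 2 x)) h0l (hlaml 0 x hx0) (hlamL 0 x hx0) h0m.le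
            (hmum 1 le_rfl x hx0) (hmuM 1 le_rfl x hx0) (he 0) (by simp)
            (abs_le_phiBD _ _)
          have hrw : lam 0 x * 0 - (lam 0 x + mu 1 x) * u 1 x + mu 1 x * u 2 x
              = -(lam 0 x + mu 1 x) * u 1 x + mu 1 x * u 2 x := by ring
          rw [hrw] at hky
          have hd : D 0 x = -(lam 0 x + mu 1 x) * u 1 x + mu 1 x * u 2 x := by
            simp [hDdef]
          have hL0' : f' 0 x = u 1 x / phiBD (e 0) (u 1 x)
              * (-(lam 0 x + mu 1 x) * u 1 x + mu 1 x * u 2 x) := by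
            rw [hf'x 0, hd, pow_zero, one_mul]
          have hf1 : f 1 x = β * phiBD (e 1) (u 2 x) := by rw [hfx 1, pow_one]
          have hf0 : f 0 x = phiBD (e 0) (u 1 x) := by rw [hfx 0, pow_zero, one_mul]
          have hMfix : M * phiBD (e 1) (u 2 x) = sLM * (β * phiBD (e 1) (u 2 x)) := by
            rw [hM_eq]; ring
          have he0 : β^(0:ℕ) * e 0 = e 0 := by rw [pow_zero, one_mul]
          rw [hL0', hQ0, hf1, hf0, he0]
          linarith [hky, hMfix]
        | succ j =>
          show f' (j+1) x ≤ sLM * Q (j+1)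
            + (sLM * f (j+2) x + (L+M) * (β^(j+1) * e (j+1))) - (l+m) * f (j+1) x
          have hky := keyIneqBD l L m M (lam (j+1) x) (mu (j+2) x) (u (j+1) x)
            (u (j+2) x) (u (j+3) x) (e (j+1)) (phiBD (e j) (u (j+1) x))
            (phiBD (e (j+2)) (u (j+3) x)) h0l (hlaml (j+1) x hx0) (hlamL (j+1) x hx0)
            h0m.le (hmum (j+2) (by omega) x hx0) (hmuM (j+2) (by omega) x hx0)
            (he (j+1)) (abs_le_phiBD _ _) (abs_le_phiBD _ _)
          have hd : D (j+1) x = lam (j+1) x * u (j+1) x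
              - (lam (j+1) x + mu (j+2) x) * u (j+2) x + mu (j+2) x * u (j+3) x := by
            simp [hDdef]
          have hLf : f' (j+1) x = β^(j+1) * (u (j+2) x / phiBD (e (j+1)) (u (j+2) x)
              * (lam (j+1) x * u (j+1) x - (lam (j+1) x + mu (j+2) x) * u (j+2) x
                + mu (j+2) x * u (j+3) x)) := by
            rw [hf'x (j+1), hd]
          have hscaled := mul_le_mul_of_nonneg_left hky (pow_nonneg hβ0 (j+1))
          have hdist : β^(j+1) * (L * phiBD (e j) (u (j+1) x)
                + M * phiBD (e (j+2)) (u (j+3) x)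
                - (l+m) * phiBD (e (j+1)) (u (j+2) x) + (L+M) * e (j+1))
              = β^(j+1) * (L * phiBD (e j) (u (j+1) x))
                + β^(j+1) * (M * phiBD (e (j+2)) (u (j+3) x))
                - (l+m) * (β^(j+1) * phiBD (e (j+1)) (u (j+2) x))
                + (L+M) * (β^(j+1) * e (j+1)) := by ring
          rw [hdist] at hscaled
          have eqL : β^(j+1) * (L * phiBD (e j) (u (j+1) x))
              = sLM * (β^j * phiBD (e j) (u (j+1) x)) := by
            rw [pow_succ, ← hβL]; ring
          have eqM : β^(j+1) * (M * phiBD (e (j+2)) (u (j+3) x))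
              = sLM * (β^(j+2) * phiBD (e (j+2)) (u (j+3) x)) := by
            have h2 : β^(j+2) = β^(j+1) * β := pow_succ β (j+1)
            rw [h2, hM_eq]; ring
          have hfj : f j x = β^j * phiBD (e j) (u (j+1) x) := hfx j
          have hfj1 : f (j+1) x = β^(j+1) * phiBD (e (j+1)) (u (j+2) x) := by
            rw [hfx (j+1)]
          have hfj2 : f (j+2) x = β^(j+2) * phiBD (e (j+2)) (u (j+3) x) := by
            rw [hfx (j+2)]
          rw [hLf, hQs j, hfj, hfj1, hfj2]
          linarith [hscaled, eqL, eqM]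
      have hQsum : Summable Q := by
        apply (summable_nat_add_iff 1).mp
        have hq : (fun n => Q (n+1)) = fun n => f n x := funext hQs
        rw [hq]; exact hgsum
      have hQts : ∑' k, Q k = ∑' k, f k x := by
        rw [hQsum.tsum_eq_zero_add, hQ0, zero_add, tsum_congr hQs]
      have hshiftsum : Summable (fun k => f (k+1) x) := (summable_nat_add_iff 1).mpr hgsum
      have hshift_le : ∑' k, f (k+1) x ≤ ∑' k, f k x := by
        rw [hgsum.tsum_eq_zero_add]
        linarith [hf_nonneg 0 x]
      have hesum' : Summable (fun k => (L+M) * (β^k * e k)) := hesum.mul_left (L+M)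
      have hsum1 : Summable (fun k => sLM * Q k
          + (sLM * f (k+1) x + (L+M) * (β^k * e k))) :=
        (hQsum.mul_left sLM).add ((hshiftsum.mul_left sLM).add hesum')
      calc (∑' k, f' k x)
          ≤ ∑' k, (sLM * Q k + (sLM * f (k+1) x + (L+M) * (β^k * e k))
              - (l+m) * f k x) :=
            Summable.tsum_le_tsum hterm hf'sum (hsum1.sub (hgsum.mul_left (l+m)))
      _ = sLM * (∑' k, Q k) + (sLM * (∑' k, f (k+1) x)
            + (L+M) * (∑' k, β^k * e k)) - (l+m) * (∑' k, f k x) := by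
            rw [Summable.tsum_sub hsum1 (hgsum.mul_left (l+m)),
              Summable.tsum_add (hQsum.mul_left sLM) ((hshiftsum.mul_left sLM).add hesum'),
              Summable.tsum_add (hshiftsum.mul_left sLM) hesum',
              tsum_mul_left, tsum_mul_left, tsum_mul_left, tsum_mul_left]
      _ ≤ sLM * (∑' k, f k x) + (sLM * (∑' k, f k x) + (L+M) * (ε * C₀))
            - (l+m) * (∑' k, f k x) := by
            rw [hQts, hC₀sum]
            have hmono := mul_le_mul_of_nonneg_left hshift_le hsLM0
            linarith
      _ = (-α) * (∑' k, f k x) + ε * ((L+M) * C₀) := by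
            simp only [hαdef]; ring
    have hVcont : ContinuousOn (fun s => ∑' k, f k s) (Set.Icc 0 t₀) := by
      intro x hx
      have hxI : x ∈ Set.Ioo (-1:ℝ) T := ⟨by linarith [hx.1], by linarith [hx.2, htT]⟩
      exact ((hVD x hxI).continuousAt).continuousWithinAt
    have hderivW : ∀ x ∈ Set.Ico (0:ℝ) t₀, HasDerivWithinAt (fun s => ∑' k, f k s)
        (∑' k, f' k x) (Set.Ici x) x := by
      intro x hx
      have hxI : x ∈ Set.Ioo (-1:ℝ) T := ⟨by linarith [hx.1], by linarith [hx.2]⟩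
      exact (hVD x hxI).hasDerivWithinAt
    have hgron := gronwall_scalar (δ := ∑' k, f k 0) (K := -α)
      (ε := ε * ((L+M) * C₀)) hVcont hderivW (le_refl _) hineq t₀ ⟨ht₀, le_refl t₀⟩
    rw [sub_zero, gronwallBound_of_K_ne_0 (neg_ne_zero.mpr hα.ne')] at hgron
    have hVle : (∑' k : ℕ, β^k * |u (k+1) t₀|) ≤ ∑' k, f k t₀ := by
      apply Summable.tsum_le_tsum _ (hVsum t₀ ⟨ht₀, htT.le⟩) (hVsummand t₀ ⟨ht₀, htT.le⟩)
      intro k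
      have hle : |u (k+1) t₀| ≤ phiBD (e k) (w k t₀) := by
        rw [hw_eq k t₀ ht₀]; exact abs_le_phiBD _ _
      calc β^k * |u (k+1) t₀| ≤ β^k * phiBD (e k) (w k t₀) :=
            mul_le_mul_of_nonneg_left hle (pow_nonneg hβ0 k)
      _ = f k t₀ := by simp only [hfdef]
    have hV0le : (∑' k, f k 0) ≤ (∑' k : ℕ, β^k * |u (k+1) 0|) + ε * C₀ := by
      have h1 : ∀ k, f k 0 ≤ β^k * |u (k+1) 0| + β^k * e k := by
        intro k
        have hle : phiBD (e k) (w k 0) ≤ |u (k+1) 0| + e k := by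
          rw [hw_eq k 0 le_rfl]; exact phiBD_le _ _ (he k).le
        calc f k 0 = β^k * phiBD (e k) (w k 0) := by simp only [hfdef]
        _ ≤ β^k * (|u (k+1) 0| + e k) :=
            mul_le_mul_of_nonneg_left hle (pow_nonneg hβ0 k)
        _ = β^k * |u (k+1) 0| + β^k * e k := by ring
      calc (∑' k, f k 0) ≤ ∑' k, (β^k * |u (k+1) 0| + β^k * e k) :=
            Summable.tsum_le_tsum h1 (hVsummand 0 ⟨le_rfl, hT0⟩)
              ((hVsum 0 ⟨le_rfl, hT0⟩).add hesum)
      _ = (∑' k : ℕ, β^k * |u (k+1) 0|) + ∑' k, β^k * e k :=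
            Summable.tsum_add (hVsum 0 ⟨le_rfl, hT0⟩) hesum
      _ = (∑' k : ℕ, β^k * |u (k+1) 0|) + ε * C₀ := by rw [hC₀sum]
    have hexp1 : Real.exp (-α * t₀) ≤ 1 := by
      rw [← Real.exp_zero]
      exact Real.exp_le_exp.mpr (by nlinarith)
    have hexp0 : 0 < Real.exp (-α * t₀) := Real.exp_pos _
    have hLM0 : (0:ℝ) ≤ L + M := by linarith
    have hA0 : 0 ≤ ε * ((L+M) * C₀) := mul_nonneg hε.le (mul_nonneg hLM0 hC₀0)
    have hErr : ε * ((L+M) * C₀) / (-α) * (Real.exp (-α * t₀) - 1)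
        ≤ ε * ((L+M) * C₀) / α := by
      rw [div_neg]
      have hre : -(ε * ((L+M) * C₀) / α) * (Real.exp (-α * t₀) - 1)
          = ε * ((L+M) * C₀) / α * (1 - Real.exp (-α * t₀)) := by ring
      rw [hre]
      have hd0 : 0 ≤ ε * ((L+M) * C₀) / α := div_nonneg hA0 hα.le
      nlinarith [hexp0]
    have hstep : (∑' k, f k 0) * Real.exp (-α * t₀)
        ≤ Real.exp (-α * t₀) * (∑' k : ℕ, β^k * |u (k+1) 0|) + ε * C₀ := by
      calc (∑' k, f k 0) * Real.exp (-α * t₀)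
          ≤ ((∑' k : ℕ, β^k * |u (k+1) 0|) + ε * C₀) * Real.exp (-α * t₀) :=
            mul_le_mul_of_nonneg_right hV0le hexp0.le
      _ = Real.exp (-α * t₀) * (∑' k : ℕ, β^k * |u (k+1) 0|)
            + ε * C₀ * Real.exp (-α * t₀) := by ring
      _ ≤ Real.exp (-α * t₀) * (∑' k : ℕ, β^k * |u (k+1) 0|) + ε * C₀ := by
            have h0' : 0 ≤ ε * C₀ := mul_nonneg hε.le hC₀0
            nlinarith [hexp1]
    have hCCeq : ε * C₀ + ε * ((L+M) * C₀) / α = ε * CC := by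
      simp only [hCCdef]
      field_simp
    linarith [le_trans hVle hgron, hstep, hErr, hCCeq]
  refine le_of_forall_pos_le_add fun δ hδ => ?_
  have h1 := key (δ / (CC + 1)) (by positivity)
  have h2 : δ / (CC + 1) * CC ≤ δ := by
    rw [div_mul_eq_mul_div, div_le_iff₀ (by linarith)]
    nlinarith
  linarith
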